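/- Suppose f : ℝ → ℝ is continuous and there exists θ > 2N such that 0 < θ·F(t) ≤ t·f(t) for all t ≠ 0, where F(t) = ∫₀ᵗ f(s) ds, and suppose lim_{t→0} f(t)/|t|^{N−1} = 0. Then there exist constants C₃, C₄ > 0 such that f(t)·t ≥ C₃·|t|^θ − C₄·|t|^N for all t ∈ ℝ. -/

import Mathlib

/-!
Writing `F` for the primitive of `f` vanishing at `0`, the Ambrosetti–Rabinowitz condition
`θ F(t) ≤ t f(t)` says that `F(t) / |t|^θ` is nondecreasing in `|t|`, so `F(t) ≥ c |t|^θ` for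
`|t| ≥ 1`, with `c = min (F 1) (F (-1)) > 0`. Hence `f(t) t ≥ θ c |t|^θ` there, while for
`|t| ≤ 1` we have `|t|^θ ≤ |t|^N` and `f(t) t > 0`, so `C₃ = C₄ = θ c` works.
-/

open Set

section Growth

variable {F f : ℝ → ℝ} {θ : ℝ}

theorem monotoneOn_div_rpow_of_le_mul_deriv (hd : ∀ t > 0, HasDerivAt F (f t) t)
    (h : ∀ t > 0, θ * F t ≤ t * f t) :
    MonotoneOn (fun t => F t / t ^ θ) (Ioi 0) := by
  have hder : ∀ t > 0, HasDerivAt (fun t => F t / t ^ θ)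
      (t ^ (θ - 1) * (t * f t - θ * F t) / (t ^ θ) ^ 2) t := by
    intro t ht
    refine ((hd t ht).div (Real.hasDerivAt_rpow_const (Or.inl ht.ne')) (by positivity)).congr_deriv
      ?_
    rw [← sub_add_cancel θ 1, Real.rpow_add_one ht.ne', add_sub_cancel_right]
    ring
  refine monotoneOn_of_hasDerivWithinAt_nonneg (convex_Ioi 0)
    (f' := fun t => t ^ (θ - 1) * (t * f t - θ * F t) / (t ^ θ) ^ 2)
    (fun t ht => (hder t ht).continuousAt.continuousWithinAt) (fun t ht => ?_) (fun t ht => ?_)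
  · rw [interior_Ioi] at ht
    exact (hder t ht).hasDerivWithinAt
  · rw [interior_Ioi] at ht
    have ht : (0 : ℝ) < t := ht
    exact div_nonneg (mul_nonneg (by positivity) (sub_nonneg.mpr (h t ht))) (by positivity)

theorem mul_rpow_le_of_le_mul_deriv (hd : ∀ t > 0, HasDerivAt F (f t) t)
    (h : ∀ t > 0, θ * F t ≤ t * f t) {t : ℝ} (ht : 1 ≤ t) :
    F 1 * t ^ θ ≤ F t := by
  have hmono := monotoneOn_div_rpow_of_le_mul_deriv hd h (by simp : (1 : ℝ) ∈ Ioi 0)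
    (show t ∈ Ioi 0 from zero_lt_one.trans_le ht) ht
  simp only [Real.one_rpow, div_one] at hmono
  rwa [← le_div_iff₀ (Real.rpow_pos_of_pos (zero_lt_one.trans_le ht) θ)]

theorem exists_mul_abs_rpow_le (hd : ∀ t, HasDerivAt F (f t) t) (hpos : ∀ t ≠ 0, 0 < F t)
    (h : ∀ t ≠ 0, θ * F t ≤ t * f t) :
    ∃ c > 0, ∀ t, 1 ≤ |t| → c * |t| ^ θ ≤ F t := by
  refine ⟨min (F 1) (F (-1)), lt_min (hpos 1 one_ne_zero) (hpos (-1) (by norm_num)),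
    fun t ht => ?_⟩
  rcases le_total 0 t with ht0 | ht0
  · rw [abs_of_nonneg ht0] at ht ⊢
    calc min (F 1) (F (-1)) * t ^ θ ≤ F 1 * t ^ θ := by gcongr; exact min_le_left _ _
      _ ≤ F t := mul_rpow_le_of_le_mul_deriv (fun t _ => hd t) (fun t ht => h t ht.ne') ht
  · rw [abs_of_nonpos ht0] at ht ⊢
    have hd' (s : ℝ) : HasDerivAt (fun s => F (-s)) (-f (-s)) s := by
      exact ((hd (-s)).comp s (hasDerivAt_neg s)).congr_deriv (mul_neg_one _)
    have h' (s : ℝ) (hs : s > 0) : θ * F (-s) ≤ s * -f (-s) := by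
      linarith [h (-s) (neg_ne_zero.mpr hs.ne')]
    calc min (F 1) (F (-1)) * (-t) ^ θ ≤ F (-1) * (-t) ^ θ := by gcongr; exact min_le_right _ _
      _ ≤ F (- -t) := mul_rpow_le_of_le_mul_deriv (fun s _ => hd' s) h' ht
      _ = F t := by rw [neg_neg]

end Growth

theorem stmt8_general (N : ℕ) (θ : ℝ) (hθ : 2 * (N : ℝ) < θ)
    (f : ℝ → ℝ) (hcont : Continuous f)
    (hAR : ∀ t : ℝ, t ≠ 0 →
      0 < θ * (∫ s in (0:ℝ)..t, f s) ∧ θ * (∫ s in (0:ℝ)..t, f s) ≤ t * f t) :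
    ∃ C₃ > (0:ℝ), ∃ C₄ > (0:ℝ), ∀ t : ℝ,
      f t * t ≥ C₃ * |t| ^ θ - C₄ * |t| ^ N := by
  have hθ0 : 0 < θ := by linarith [N.cast_nonneg (α := ℝ)]
  have hFpos (t : ℝ) (ht : t ≠ 0) : 0 < ∫ s in (0:ℝ)..t, f s :=
    pos_of_mul_pos_right (hAR t ht).1 hθ0.le
  obtain ⟨c, hc, hgrowth⟩ := exists_mul_abs_rpow_le
    (fun t => (hcont.integral_hasStrictDerivAt 0 t).hasDerivAt) hFpos (fun t ht => (hAR t ht).2)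
  refine ⟨θ * c, by positivity, θ * c, by positivity, fun t => ?_⟩
  rcases eq_or_ne t 0 with rfl | ht0
  · simp only [mul_zero, abs_zero, Real.zero_rpow hθ0.ne', ge_iff_le]
    nlinarith [pow_nonneg (le_refl (0 : ℝ)) N, mul_pos hθ0 hc]
  have hAR_t := (hAR t ht0).2
  rcases le_total |t| 1 with hsmall | hbig
  · have hpow : |t| ^ θ ≤ |t| ^ N := by
      rw [← Real.rpow_natCast]
      exact Real.rpow_le_rpow_of_exponent_ge (abs_pos.mpr ht0) hsmall (by linarith)
    nlinarith [hFpos t ht0, mul_pos hθ0 hc]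
  · nlinarith [hgrowth t hbig, pow_nonneg (abs_nonneg t) N, mul_pos hθ0 hc]

theorem stmt8 (N : ℕ) (hN : 2 ≤ N) (θ : ℝ) (hθ : 2 * (N : ℝ) < θ)
    (f : ℝ → ℝ) (hcont : Continuous f)
    (hAR : ∀ t : ℝ, t ≠ 0 →
      0 < θ * (∫ s in (0:ℝ)..t, f s) ∧ θ * (∫ s in (0:ℝ)..t, f s) ≤ t * f t)
    (hlim : Filter.Tendsto (fun t : ℝ => f t / |t| ^ (N - 1))
      (nhdsWithin 0 {0}ᶜ) (nhds 0)) :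
    ∃ C₃ > (0:ℝ), ∃ C₄ > (0:ℝ), ∀ t : ℝ,
      f t * t ≥ C₃ * |t| ^ θ - C₄ * |t| ^ N :=
  stmt8_general N θ hθ f hcont hAR
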